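/- arXiv:1509.09105 — 15 statements merged into one kernel-verified Lean document; each statement's English description precedes it below -/
import Mathlib

section
/- Let (A; ⊕, ^L, ^R, 0, 1) be a weak pre pseudo effect algebra with induced partial order ≤. Then: (i) 1^L = 0 = 1^R; (ii) for all a, b ∈ A, if a^R = b^R then a = b, and if a^L = b^L then a = b; (iii) 1 is the top element of (A, ≤), i.e. b ≤ 1 for all b ∈ A; (iv) 0 is the bottom element of (A, ≤), i.e. 0 ≤ a for all a ∈ A. -/
/-- A weak pre pseudo effect algebra `(A; ⊕, ^L, ^R, 0, 1)`.
The partial operation `⊕` is given by a domain predicate `D` together with a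
(total) value function `add`; `left` is `^L`, `right` is `^R`. -/
structure WPPEA (A : Type*) where
  /-- domain of the partial operation `⊕` -/
  D : A → A → Prop
  /-- value of `⊕` (meaningful on the domain `D`) -/
  add : A → A → A
  /-- left orthosupplement `^L` -/
  left : A → A
  /-- right orthosupplement `^R` -/
  right : A → A
  zero : A
  one : A
  /-- (WPPEA1) partial associativity: definedness part -/
  assoc_defined : ∀ a b c, (D a b ∧ D (add a b) c) ↔ (D b c ∧ D a (add b c))
  /-- (WPPEA1) partial associativity: equality part -/
  assoc_eq : ∀ a b c, D a b → D (add a b) c → add (add a b) c = add a (add b c)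
  /-- (WPPEA2) `a ⊕ a^R` is defined -/
  orthoR_defined : ∀ a, D a (right a)
  /-- (WPPEA2) `a^L ⊕ a` is defined -/
  orthoL_defined : ∀ a, D (left a) a
  /-- (WPPEA2) `a ⊕ a^R = 1` -/
  add_orthoR : ∀ a, add a (right a) = one
  /-- (WPPEA2) `a^L ⊕ a = 1` -/
  add_orthoL : ∀ a, add (left a) a = one
  /-- (WPPEA3) `a ⊕ b^R` is defined iff `b^L ⊕ a` is defined -/
  defined_iff : ∀ a b, D a (right b) ↔ D (left b) a
  /-- (WPPEA3) the induced relation (`a ≤ b` iff `a ⊕ b^R` is defined) is antisymmetric -/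
  le_antisymm' : ∀ a b, D a (right b) → D b (right a) → a = b
  /-- (WPPEA3) the induced relation is transitive (reflexivity is `orthoR_defined`) -/
  le_trans' : ∀ a b c, D a (right b) → D b (right c) → D a (right c)
  /-- (WPPEA4) if `1 ⊕ a` is defined then `a = 0` -/
  one_add_eq_zero : ∀ a, D one a → a = zero
  /-- (WPPEA4) if `a ⊕ 1` is defined then `a = 0` -/
  add_one_eq_zero : ∀ a, D a one → a = zero
  /-- (WPPEA5) `0` is comparable to every element -/
  zero_comparable : ∀ a, D zero (right a) ∨ D a (right zero)
  /-- (WPPEA5) `1` is comparable to every element -/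
  one_comparable : ∀ a, D one (right a) ∨ D a (right one)

namespace WPPEA
variable {A : Type*}
/-- The induced partial order: `a ≤ b` iff `a ⊕ b^R` is defined. -/
def le (S : WPPEA A) (a b : A) : Prop := S.D a (S.right b)
end WPPEA

theorem wppea_basic_properties {A : Type*} (S : WPPEA A) :
    (S.left S.one = S.zero ∧ S.right S.one = S.zero) ∧
    (∀ a b : A, S.right a = S.right b → a = b) ∧
    (∀ a b : A, S.left a = S.left b → a = b) ∧
    (∀ b : A, S.le b S.one) ∧
    (∀ a : A, S.le S.zero a) := by
  have h1L : S.left S.one = S.zero := S.add_one_eq_zero _ (S.orthoL_defined S.one)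
  have h1R : S.right S.one = S.zero := S.one_add_eq_zero _ (S.orthoR_defined S.one)
  have top : ∀ b : A, S.D b (S.right S.one) := by
    intro b
    have h := (S.assoc_defined (S.left b) b (S.right S.one)).1
      ⟨S.orthoL_defined b, by rw [S.add_orthoL]; exact S.orthoR_defined S.one⟩
    exact h.1
  refine ⟨⟨h1L, h1R⟩, ?_, ?_, top, ?_⟩
  · intro a b h
    refine S.le_antisymm' a b ?_ ?_
    · have := S.orthoR_defined a; rwa [h] at this
    · have := S.orthoR_defined b; rwa [← h] at this
  · intro a b h
    refine S.le_antisymm' a b ?_ ?_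
    · refine (S.defined_iff a b).2 ?_
      have := S.orthoL_defined a; rwa [h] at this
    · refine (S.defined_iff b a).2 ?_
      have := S.orthoL_defined b; rwa [← h] at this
  · intro a
    refine (S.defined_iff S.zero a).2 ?_
    have := top (S.left a)
    rwa [h1R] at this
end

section
/- Let (A; ⊕, ^L, ^R, 0, 1) be a weak pre pseudo effect algebra. Then for every a ∈ A, a⊕0 and 0⊕a are defined and a⊕0 = a = 0⊕a; moreover 0^L = 1 = 0^R. -/
theorem wppea_zero_neutral {A : Type*} (S : WPPEA A) :
    (∀ a : A, S.D a S.zero ∧ S.D S.zero a ∧ S.add a S.zero = a ∧ S.add S.zero a = a) ∧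
    S.left S.zero = S.one ∧ S.right S.zero = S.one := by
  have hr1 : S.right S.one = S.zero := S.one_add_eq_zero _ (S.orthoR_defined S.one)
  have hl1 : S.left S.one = S.zero := S.add_one_eq_zero _ (S.orthoL_defined S.one)
  have hDa0 : ∀ a, S.D a S.zero := by
    intro a
    rcases S.one_comparable a with h | h
    · have h0 := S.one_add_eq_zero _ h
      have h2 := S.orthoR_defined a
      rwa [h0] at h2
    · rwa [hr1] at h
  have hD0a : ∀ a, S.D S.zero a := by
    intro a
    have h := (S.defined_iff a S.one).mp (by rw [hr1]; exact hDa0 a)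
    rwa [hl1] at h
  have hadd0x : ∀ x, S.add S.zero x = x := by
    intro x
    have h1 : S.D (S.add S.zero x) (S.right x) :=
      ((S.assoc_defined S.zero x (S.right x)).mpr
        ⟨S.orthoR_defined x, by rw [S.add_orthoR x]; exact hD0a _⟩).2
    have h2 : S.D x (S.right (S.add S.zero x)) :=
      ((S.assoc_defined S.zero x (S.right (S.add S.zero x))).mp
        ⟨hD0a x, S.orthoR_defined _⟩).1
    exact S.le_antisymm' _ _ h1 h2
  have haddx0 : ∀ x, S.add x S.zero = x := by
    intro x
    have h1 : S.D (S.add x S.zero) (S.right x) := by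
      have h := ((S.assoc_defined (S.left x) x S.zero).mp
        ⟨S.orthoL_defined x, by rw [S.add_orthoL x]; exact hDa0 _⟩).2
      exact (S.defined_iff _ _).mpr h
    have h2 : S.D x (S.right (S.add x S.zero)) := by
      have h3 := ((S.assoc_defined x S.zero (S.right (S.add x S.zero))).mp
        ⟨hDa0 x, S.orthoR_defined _⟩).2
      rwa [hadd0x] at h3
    exact S.le_antisymm' _ _ h1 h2
  refine ⟨fun a => ⟨hDa0 a, hD0a a, haddx0 a, hadd0x a⟩, ?_, ?_⟩
  · have h := S.add_orthoL S.zero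
    rwa [haddx0] at h
  · have h := S.add_orthoR S.zero
    rwa [hadd0x] at h
end

section
/- Let (A; ⊕, ^L, ^R, 0, 1) be a weak pre pseudo effect algebra. Then for every a ∈ A: a^{LRL} = a^L, a^{RLR} = a^R, and a^{RL} = a = a^{LR} (where iterated superscripts denote successive applications of the unary operations, e.g. a^{RL} = (a^R)^L). -/
namespace WPPEA
variable {A : Type*}
/-- The opposite weak pre pseudo effect algebra. -/
def op (S : WPPEA A) : WPPEA A where
  D a b := S.D b a
  add a b := S.add b a
  left := S.right
  right := S.left
  zero := S.zero
  one := S.one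
  assoc_defined a b c := (S.assoc_defined c b a).symm
  assoc_eq a b c h1 h2 := by
    have h := (S.assoc_defined c b a).mpr ⟨h1, h2⟩
    exact (S.assoc_eq c b a h.1 h.2).symm
  orthoR_defined a := S.orthoL_defined a
  orthoL_defined a := S.orthoR_defined a
  add_orthoR := S.add_orthoL
  add_orthoL := S.add_orthoR
  defined_iff a b := (S.defined_iff a b).symm
  le_antisymm' a b h1 h2 :=
    S.le_antisymm' a b ((S.defined_iff a b).mpr h1) ((S.defined_iff b a).mpr h2)
  le_trans' a b c h1 h2 :=
    (S.defined_iff a c).mp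
      (S.le_trans' a b c ((S.defined_iff a b).mpr h1) ((S.defined_iff b c).mpr h2))
  one_add_eq_zero a h := S.add_one_eq_zero a h
  add_one_eq_zero a h := S.one_add_eq_zero a h
  zero_comparable a :=
    (S.zero_comparable a).elim (fun h => Or.inl ((S.defined_iff S.zero a).mp h))
      (fun h => Or.inr ((S.defined_iff a S.zero).mp h))
  one_comparable a :=
    (S.one_comparable a).elim (fun h => Or.inl ((S.defined_iff S.one a).mp h))
      (fun h => Or.inr ((S.defined_iff a S.one).mp h))

/-- `a^{RL} ≤ a`. -/
theorem fact1 (S : WPPEA A) (a : A) : S.D (S.right (S.left a)) (S.right a) :=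
  (S.defined_iff _ a).mpr (S.orthoR_defined (S.left a))

/-- `x ≤ y → y^R ≤ x^R`. -/
theorem antitoneR (S : WPPEA A) (x y : A) (h : S.D x (S.right y)) :
    S.D (S.right y) (S.right (S.right x)) :=
  (S.defined_iff _ (S.right x)).mpr
    (S.le_trans' _ x y (S.orthoL_defined (S.right x)) h)

theorem rlr (S : WPPEA A) (a : A) : S.right (S.left (S.right a)) = S.right a :=
  S.le_antisymm' _ _ (fact1 S (S.right a))
    (antitoneR S (S.left (S.right a)) a (S.orthoL_defined (S.right a)))

theorem lrl (S : WPPEA A) (a : A) : S.left (S.right (S.left a)) = S.left a :=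
  rlr S.op a

end WPPEA

theorem wppea_ortho_involutive {A : Type*} (S : WPPEA A) :
    ∀ a : A, S.left (S.right (S.left a)) = S.left a ∧
      S.right (S.left (S.right a)) = S.right a ∧
      S.left (S.right a) = a ∧ S.right (S.left a) = a := by
  intro a
  refine ⟨S.lrl a, S.rlr a, ?_, ?_⟩
  · refine S.le_antisymm' _ _ (S.orthoL_defined (S.right a)) ?_
    rw [S.rlr a]
    exact S.orthoR_defined a
  · refine S.le_antisymm' _ _ (WPPEA.fact1 S a) ?_
    refine (S.defined_iff a (S.right (S.left a))).mpr ?_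
    rw [S.lrl a]
    exact S.orthoL_defined a
end

section
/- Let (A; ⊕, ^L, ^R, 0, 1) be a weak pre pseudo effect algebra with induced partial order ≤. If a⊕b is defined, then a ≤ a⊕b and b ≤ a⊕b. -/
theorem wppea_le_add {A : Type*} (S : WPPEA A) :
    ∀ a b : A, S.D a b → S.le a (S.add a b) ∧ S.le b (S.add a b) := by
  intro a b hab
  constructor
  · -- a ≤ a⊕b, via D (left (a⊕b)) a
    rw [WPPEA.le, S.defined_iff]
    exact ((S.assoc_defined (S.left (S.add a b)) a b).mpr
      ⟨hab, S.orthoL_defined _⟩).1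
  · rw [WPPEA.le]
    exact ((S.assoc_defined a b (S.right (S.add a b))).mp
      ⟨hab, S.orthoR_defined _⟩).1
end

section
/- Let (A; ⊕, ^L, ^R, 0, 1) be a weak pre pseudo effect algebra. If a⊕b is defined and a⊕b = a, then b = 0; if a⊕b is defined and a⊕b = b, then a = 0. -/
theorem wppea_add_eq_self {A : Type*} (S : WPPEA A) :
    ∀ a b : A, S.D a b →
      (S.add a b = a → b = S.zero) ∧ (S.add a b = b → a = S.zero) := by
  intro a b hab
  constructor
  · intro h
    have h1 : S.D a b ∧ S.D (S.left a) (S.add a b) := ⟨hab, by rw [h]; exact S.orthoL_defined a⟩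
    have h2 := (S.assoc_defined (S.left a) a b).mpr h1
    rw [S.add_orthoL a] at h2
    exact S.one_add_eq_zero b h2.2
  · intro h
    have h1 : S.D a b ∧ S.D (S.add a b) (S.right b) := ⟨hab, by rw [h]; exact S.orthoR_defined b⟩
    have h2 := (S.assoc_defined a b (S.right b)).mp h1
    rw [S.add_orthoR b] at h2
    exact S.add_one_eq_zero a h2.2
end

section
/- Let (A; ⊕, ^L, ^R, 0, 1) be a weak pre pseudo effect algebra with induced partial order ≤. Then for all a, b ∈ A: a ≤ b iff b^R ≤ a^R, and a ≤ b iff b^L ≤ a^L. -/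
theorem wppea_ortho_antitone {A : Type*} (S : WPPEA A) :
    ∀ a b : A, (S.le a b ↔ S.le (S.right b) (S.right a)) ∧
      (S.le a b ↔ S.le (S.left b) (S.left a)) := by
  -- a^{RL} ≤ a
  have hRL : ∀ a : A, S.le (S.left (S.right a)) a := fun a => S.orthoL_defined (S.right a)
  -- a^{LR} ≤ a
  have hLR : ∀ a : A, S.le (S.right (S.left a)) a := fun a =>
    (S.defined_iff (S.right (S.left a)) a).mpr (S.orthoR_defined (S.left a))
  -- forward antitone: a ≤ b → b^R ≤ a^R
  have fwd : ∀ a b : A, S.le a b → S.le (S.right b) (S.right a) := by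
    intro a b h
    have h1 : S.D (S.left (S.right a)) (S.right b) :=
      S.le_trans' (S.left (S.right a)) a b (hRL a) h
    exact (S.defined_iff (S.right b) (S.right a)).mpr h1
  -- a^{RLR} = a^R
  have hRLR : ∀ a : A, S.right (S.left (S.right a)) = S.right a := fun a =>
    S.le_antisymm' _ _ (hLR (S.right a)) (fwd _ _ (hRL a))
  -- a^{RL} = a
  have hRLeq : ∀ a : A, S.left (S.right a) = a := by
    intro a
    refine S.le_antisymm' _ _ (hRL a) ?_
    show S.D a (S.right (S.left (S.right a)))
    rw [hRLR a]
    exact S.orthoR_defined a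
  -- a^{LR} = a
  have hLReq : ∀ a : A, S.right (S.left a) = a := by
    intro a
    refine S.le_antisymm' _ _ (hLR a) ?_
    show S.D a (S.right (S.right (S.left a)))
    refine (S.defined_iff a (S.right (S.left a))).mpr ?_
    show S.D (S.left (S.right (S.left a))) a
    rw [hRLeq (S.left a)]
    exact S.orthoL_defined a
  intro a b
  constructor
  · -- right version
    constructor
    · exact fwd a b
    · intro h
      have h1 : S.D (S.left (S.right a)) (S.right b) :=
        (S.defined_iff (S.right b) (S.right a)).mp h
      rw [hRLeq a] at h1
      exact h1
  · -- left version
    constructor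
    · intro h
      have h1 : S.D (S.left b) a := (S.defined_iff a b).mp h
      show S.D (S.left b) (S.right (S.left a))
      rw [hLReq a]
      exact h1
    · intro h
      have h1 : S.D (S.left b) (S.right (S.left a)) := h
      rw [hLReq a] at h1
      exact (S.defined_iff a b).mpr h1
end

section
/- Let (A; ⊕, ^L, ^R, 0, 1) be a weak pre pseudo effect algebra with induced partial order ≤. If b ≤ c and a⊕c is defined, then a⊕b is defined and a⊕b ≤ a⊕c. If b ≤ c and c⊕a is defined, then b⊕a is defined and b⊕a ≤ c⊕a. -/
namespace WPPEA
variable {A : Type*} (S : WPPEA A)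

/-- `x^{LR} ≤ x`. -/
lemma rl_le (x : A) : S.D (S.right (S.left x)) (S.right x) :=
  (S.defined_iff _ x).mpr (S.orthoR_defined (S.left x))

/-- `x^{RL} ≤ x`. -/
lemma lr_le (x : A) : S.D (S.left (S.right x)) (S.right x) :=
  S.orthoL_defined (S.right x)

lemma left_eq_left_right_left (b : A) :
    S.left b = S.left (S.right (S.left b)) := by
  apply S.le_antisymm'
  · -- D (L b) (R (L (R (L b))))
    apply (S.defined_iff (S.right (S.left (S.right (S.left b)))) b).mp
    exact S.le_trans' _ (S.right (S.left b)) b (S.rl_le (S.right (S.left b))) (S.rl_le b)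
  · -- D (L (R (L b))) (R (L b))
    exact S.lr_le (S.left b)

lemma right_left (b : A) : S.right (S.left b) = b := by
  apply S.le_antisymm' _ _ (S.rl_le b)
  apply (S.defined_iff b (S.right (S.left b))).mpr
  rw [← S.left_eq_left_right_left b]
  exact S.orthoL_defined b

lemma left_right (b : A) : S.left (S.right b) = b := by
  apply S.le_antisymm' _ _ (S.lr_le b)
  have h : S.right (S.left (S.right b)) = S.right b := S.right_left (S.right b)
  rw [h]
  exact S.orthoR_defined b

/-- definedness is antitone in the second argument. -/
lemma D_mono_right {a b c : A} (h : S.D b (S.right c)) (hac : S.D a c) : S.D a b := by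
  have h1 : S.D a (S.right (S.left c)) := by rw [S.right_left]; exact hac
  have h2 : S.D (S.left c) (S.right (S.left b)) := by
    rw [S.right_left]; exact (S.defined_iff b c).mp h
  have h3 := S.le_trans' a (S.left c) (S.left b) h1 h2
  rwa [S.right_left] at h3

/-- definedness is antitone in the first argument. -/
lemma D_mono_left {a b c : A} (h : S.D b (S.right c)) (hca : S.D c a) : S.D b a := by
  have h1 : S.D c (S.right (S.left a)) := by rw [S.right_left]; exact hca
  have h3 := S.le_trans' b c (S.left a) h h1
  rwa [S.right_left] at h3

/-- `x ≤ x ⊕ y` whenever the sum is defined. -/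
lemma le_add_left {x y : A} (h : S.D x y) : S.D x (S.right (S.add x y)) := by
  have h2 := (S.assoc_defined (S.left (S.add x y)) x y).mpr
    ⟨h, S.orthoL_defined (S.add x y)⟩
  exact (S.defined_iff x (S.add x y)).mpr h2.1

end WPPEA

theorem wppea_add_monotone {A : Type*} (S : WPPEA A) :
    ∀ a b c : A, S.le b c →
      (S.D a c → S.D a b ∧ S.le (S.add a b) (S.add a c)) ∧
      (S.D c a → S.D b a ∧ S.le (S.add b a) (S.add c a)) := by
  intro a b c hbc
  constructor
  · intro hac
    -- h1 : D (L (a⊕c)) a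
    have h1 : S.D (S.left (S.add a c)) a :=
      (S.defined_iff a (S.add a c)).mp (S.le_add_left hac)
    have h2 := (S.assoc_defined (S.left (S.add a c)) a c).mpr
      ⟨hac, S.orthoL_defined (S.add a c)⟩
    have h3 : S.D (S.add (S.left (S.add a c)) a) b := S.D_mono_right hbc h2.2
    have h4 := (S.assoc_defined (S.left (S.add a c)) a b).mp ⟨h2.1, h3⟩
    exact ⟨h4.1, (S.defined_iff (S.add a b) (S.add a c)).mpr h4.2⟩
  · intro hca
    have h1 := (S.assoc_defined c a (S.right (S.add c a))).mp
      ⟨hca, S.orthoR_defined (S.add c a)⟩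
    have h2 : S.D b (S.add a (S.right (S.add c a))) := S.D_mono_left hbc h1.2
    have h3 := (S.assoc_defined b a (S.right (S.add c a))).mpr ⟨h1.1, h2⟩
    exact ⟨h3.1, h3.2⟩
end

section
/- Let (A; +, ∖, /, 0) be a generalized pre pseudo effect algebra with induced partial order ≤. Then: (i) for every a ∈ A, a+0 and 0+a are defined and a+0 = a = 0+a; (ii) 0 is the bottom element of (A, ≤), i.e. 0 ≤ a for all a ∈ A; (iii) for every a ∈ A, a∖0 and a/0 are defined and a∖0 = a = a/0. -/
/-- A generalized pre pseudo effect algebra `(A; +, ∖, /, 0)`.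
Partial operations are given by domain predicates (`Dadd`, `Drm`, `Dlm`)
together with (total) value functions; `rm` is the right minus `∖`,
`lm` is the left minus `/`. -/
structure GPPEA (A : Type*) where
  /-- domain of `+` -/
  Dadd : A → A → Prop
  /-- value of `+` -/
  add : A → A → A
  /-- domain of the right minus `∖` -/
  Drm : A → A → Prop
  /-- value of the right minus `∖` -/
  rm : A → A → A
  /-- domain of the left minus `/` -/
  Dlm : A → A → Prop
  /-- value of the left minus `/` -/
  lm : A → A → A
  zero : A
  /-- (GPPEA1) `a ∖ a` is defined -/
  rm_self_defined : ∀ a, Drm a a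
  /-- (GPPEA1) `a / a` is defined -/
  lm_self_defined : ∀ a, Dlm a a
  /-- (GPPEA1) `a ∖ a = 0` -/
  rm_self : ∀ a, rm a a = zero
  /-- (GPPEA1) `a / a = 0` -/
  lm_self : ∀ a, lm a a = zero
  /-- (GPPEA2) `b ∖ a` is defined iff `b / a` is defined -/
  defined_iff : ∀ a b, Drm b a ↔ Dlm b a
  /-- (GPPEA2) the induced relation (`a ≤ b` iff `b ∖ a` is defined) is antisymmetric -/
  le_antisymm' : ∀ a b, Drm b a → Drm a b → a = b
  /-- (GPPEA2) the induced relation is transitive (reflexivity is `rm_self_defined`) -/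
  le_trans' : ∀ a b c, Drm b a → Drm c b → Drm c a
  /-- (GPPEA3) `a ∖ b` is defined and `a ∖ b ≥ c` iff `c + b` is defined and `a ≥ c + b` -/
  rm_iff : ∀ a b c, (Drm a b ∧ Drm (rm a b) c) ↔ (Dadd c b ∧ Drm a (add c b))
  /-- (GPPEA3) in that case `(a ∖ b) ∖ c = a ∖ (c + b)` -/
  rm_eq : ∀ a b c, Drm a b → Drm (rm a b) c → rm (rm a b) c = rm a (add c b)
  /-- (GPPEA4) `a / b` is defined and `a / b ≥ c` iff `b + c` is defined and `a ≥ b + c` -/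
  lm_iff : ∀ a b c, (Dlm a b ∧ Drm (lm a b) c) ↔ (Dadd b c ∧ Drm a (add b c))
  /-- (GPPEA4) in that case `(a / b) / c = a / (b + c)` -/
  lm_eq : ∀ a b c, Dlm a b → Drm (lm a b) c → lm (lm a b) c = lm a (add b c)

namespace GPPEA
variable {A : Type*}
/-- The induced partial order: `a ≤ b` iff `b ∖ a` is defined. -/
def le (S : GPPEA A) (a b : A) : Prop := S.Drm b a
end GPPEA

theorem gppea_zero_properties {A : Type*} (S : GPPEA A) :
    (∀ a : A, S.Dadd a S.zero ∧ S.Dadd S.zero a ∧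
      S.add a S.zero = a ∧ S.add S.zero a = a) ∧
    (∀ a : A, S.le S.zero a) ∧
    (∀ a : A, S.Drm a S.zero ∧ S.Dlm a S.zero ∧
      S.rm a S.zero = a ∧ S.lm a S.zero = a) := by
  -- 0 + a defined and equals a
  have h1 : ∀ a : A, S.Dadd S.zero a ∧ S.add S.zero a = a := by
    intro a
    have h := (S.rm_iff a a (S.rm a a)).mp
      ⟨S.rm_self_defined a, S.rm_self_defined (S.rm a a)⟩
    rw [S.rm_self a] at h
    obtain ⟨hD, hle⟩ := h
    have h2 := (S.rm_iff (S.add S.zero a) a S.zero).mpr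
      ⟨hD, S.rm_self_defined (S.add S.zero a)⟩
    exact ⟨hD, S.le_antisymm' (S.add S.zero a) a hle h2.1⟩
  -- a + 0 defined and equals a
  have h2 : ∀ a : A, S.Dadd a S.zero ∧ S.add a S.zero = a := by
    intro a
    have h := (S.lm_iff a a (S.lm a a)).mp
      ⟨S.lm_self_defined a, by rw [S.lm_self a]; exact S.rm_self_defined S.zero⟩
    rw [S.lm_self a] at h
    obtain ⟨hD, hle⟩ := h
    have h3 := (S.lm_iff (S.add a S.zero) a S.zero).mpr
      ⟨hD, S.rm_self_defined (S.add a S.zero)⟩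
    have h4 : S.Drm (S.add a S.zero) a := (S.defined_iff a (S.add a S.zero)).mpr h3.1
    exact ⟨hD, S.le_antisymm' (S.add a S.zero) a hle h4⟩
  -- 0 ≤ a, i.e. Drm a 0
  have h3 : ∀ a : A, S.Drm a S.zero ∧ S.Drm (S.rm a S.zero) a := by
    intro a
    exact (S.rm_iff a S.zero a).mpr ⟨(h2 a).1, by rw [(h2 a).2]; exact S.rm_self_defined a⟩
  -- rm a 0 = a
  have h4 : ∀ a : A, S.rm a S.zero = a := by
    intro a
    have h := (S.rm_iff a S.zero (S.rm a S.zero)).mp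
      ⟨(h3 a).1, S.rm_self_defined (S.rm a S.zero)⟩
    rw [(h2 (S.rm a S.zero)).2] at h
    exact S.le_antisymm' (S.rm a S.zero) a h.2 (h3 a).2
  -- lm a 0 = a
  have h5 : ∀ a : A, S.Dlm a S.zero ∧ S.lm a S.zero = a := by
    intro a
    have h := (S.lm_iff a S.zero a).mpr ⟨(h1 a).1, by rw [(h1 a).2]; exact S.rm_self_defined a⟩
    have h' := (S.lm_iff a S.zero (S.lm a S.zero)).mp
      ⟨h.1, S.rm_self_defined (S.lm a S.zero)⟩
    rw [(h1 (S.lm a S.zero)).2] at h'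
    exact ⟨h.1, S.le_antisymm' (S.lm a S.zero) a h'.2 h.2⟩
  refine ⟨fun a => ⟨(h2 a).1, (h1 a).1, (h2 a).2, (h1 a).2⟩,
    fun a => (h3 a).1,
    fun a => ⟨(h3 a).1, (h5 a).1, h4 a, (h5 a).2⟩⟩
end

section
/- Let (A; +, ∖, /, 0) be a generalized pre pseudo effect algebra with induced partial order ≤. Then: (i) if a+b is defined, then a ≤ a+b, b ≤ a+b, (a+b)∖b is defined with (a+b)∖b ≥ a, and (a+b)/a is defined with (a+b)/a ≥ b; (ii) if a∖b is defined, then a∖b ≤ a, a/(a∖b) is defined with a/(a∖b) ≥ b, and (a∖b)+b is defined with a ≥ (a∖b)+b; (iii) if a/b is defined, then a/b ≤ a, a∖(a/b) is defined with a∖(a/b) ≥ b, and b+(a/b) is defined with a ≥ b+(a/b). -/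
theorem gppea_add_sub_basic {A : Type*} (S : GPPEA A) :
    (∀ a b : A, S.Dadd a b →
      S.le a (S.add a b) ∧ S.le b (S.add a b) ∧
      S.Drm (S.add a b) b ∧ S.le a (S.rm (S.add a b) b) ∧
      S.Dlm (S.add a b) a ∧ S.le b (S.lm (S.add a b) a)) ∧
    (∀ a b : A, S.Drm a b →
      S.le (S.rm a b) a ∧
      S.Dlm a (S.rm a b) ∧ S.le b (S.lm a (S.rm a b)) ∧
      S.Dadd (S.rm a b) b ∧ S.le (S.add (S.rm a b) b) a) ∧
    (∀ a b : A, S.Dlm a b →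
      S.le (S.lm a b) a ∧
      S.Drm a (S.lm a b) ∧ S.le b (S.rm a (S.lm a b)) ∧
      S.Dadd b (S.lm a b) ∧ S.le (S.add b (S.lm a b)) a) := by
  have part1 : ∀ a b : A, S.Dadd a b →
      S.le a (S.add a b) ∧ S.le b (S.add a b) ∧
      S.Drm (S.add a b) b ∧ S.le a (S.rm (S.add a b) b) ∧
      S.Dlm (S.add a b) a ∧ S.le b (S.lm (S.add a b) a) := by
    intro a b hab
    have h1 := (S.rm_iff (S.add a b) b a).mpr ⟨hab, S.rm_self_defined _⟩
    have h2 := (S.lm_iff (S.add a b) a b).mpr ⟨hab, S.rm_self_defined _⟩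
    exact ⟨(S.defined_iff a (S.add a b)).mpr h2.1, h1.1, h1.1, h1.2, h2.1, h2.2⟩
  refine ⟨part1, ?_, ?_⟩
  · intro a b hab
    have h1 := (S.rm_iff a b (S.rm a b)).mp ⟨hab, S.rm_self_defined _⟩
    have h2 := part1 _ _ h1.1
    have hle : S.le (S.rm a b) a := S.le_trans' _ _ _ h2.1 h1.2
    have h3 := (S.lm_iff a (S.rm a b) b).mpr ⟨h1.1, h1.2⟩
    exact ⟨hle, h3.1, h3.2, h1.1, h1.2⟩
  · intro a b hab
    have h1 := (S.lm_iff a b (S.lm a b)).mp ⟨hab, S.rm_self_defined _⟩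
    have h2 := part1 _ _ h1.1
    have hle : S.le (S.lm a b) a := S.le_trans' _ _ _ h2.2.1 h1.2
    have h3 := (S.rm_iff a (S.lm a b) b).mpr ⟨h1.1, h1.2⟩
    exact ⟨hle, h3.1, h3.2, h1.1, h1.2⟩
end

section
/- Let (A; +, ∖, /, 0) be a generalized pre pseudo effect algebra. Then: (i) if a+b is defined and a+b = a, then b = 0, and if a+b is defined and a+b = b, then a = 0; (ii) if a+b is defined and a+b = 0, then a = 0 and b = 0; (iii) if a/b is defined, then a/b = a iff b = 0, and if a∖b is defined, then a∖b = a iff b = 0. -/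
namespace GPPEA
variable {A : Type*} (S : GPPEA A)

/-- `b ≤ a + b`. -/
lemma le_add_left {a b : A} (h : S.Dadd a b) :
    S.Drm (S.add a b) b ∧ S.Drm (S.rm (S.add a b) b) a :=
  (S.rm_iff (S.add a b) b a).mpr ⟨h, S.rm_self_defined _⟩

/-- `a ≤ a + b`. -/
lemma le_add_right {a b : A} (h : S.Dadd a b) :
    S.Dlm (S.add a b) a ∧ S.Drm (S.lm (S.add a b) a) b :=
  (S.lm_iff (S.add a b) a b).mpr ⟨h, S.rm_self_defined _⟩

lemma le_add_right' {a b : A} (h : S.Dadd a b) : S.Drm (S.add a b) a :=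
  (S.defined_iff a (S.add a b)).mpr (S.le_add_right h).1

lemma zero_le (a : A) : S.Drm a S.zero := by
  have h0 : S.Drm (S.rm a a) S.zero := by
    rw [S.rm_self a]; exact S.rm_self_defined _
  obtain ⟨hd, hle⟩ := (S.rm_iff a a S.zero).mp ⟨S.rm_self_defined a, h0⟩
  exact S.le_trans' S.zero (S.add S.zero a) a (S.le_add_right' hd) hle

lemma zero_add (a : A) : S.Dadd S.zero a ∧ S.add S.zero a = a := by
  have h0 : S.Drm (S.rm a a) S.zero := by
    rw [S.rm_self a]; exact S.rm_self_defined _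
  obtain ⟨hd, hle⟩ := (S.rm_iff a a S.zero).mp ⟨S.rm_self_defined a, h0⟩
  exact ⟨hd, S.le_antisymm' _ _ hle (S.le_add_left hd).1⟩

lemma add_zero (a : A) : S.Dadd a S.zero ∧ S.add a S.zero = a := by
  have h0 : S.Drm (S.lm a a) S.zero := by
    rw [S.lm_self a]; exact S.rm_self_defined _
  obtain ⟨hd, hle⟩ := (S.lm_iff a a S.zero).mp ⟨S.lm_self_defined a, h0⟩
  exact ⟨hd, S.le_antisymm' _ _ hle (S.le_add_right' hd)⟩

/-- `a ∖ b ≤ a`. -/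
lemma rm_le {a b : A} (h : S.Drm a b) : S.Drm a (S.rm a b) := by
  obtain ⟨hd, hle⟩ := (S.rm_iff a b (S.rm a b)).mp ⟨h, S.rm_self_defined _⟩
  exact S.le_trans' (S.rm a b) (S.add (S.rm a b) b) a (S.le_add_right' hd) hle

/-- `a / b ≤ a`. -/
lemma lm_le {a b : A} (h : S.Dlm a b) : S.Drm a (S.lm a b) := by
  obtain ⟨hd, hle⟩ := (S.lm_iff a b (S.lm a b)).mp ⟨h, S.rm_self_defined _⟩
  exact S.le_trans' (S.lm a b) (S.add b (S.lm a b)) a (S.le_add_left hd).1 hle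

lemma le_zero_eq {a : A} (h : S.Drm S.zero a) : a = S.zero :=
  S.le_antisymm' a S.zero h (S.zero_le a)

/-- (i) first half: `a + b = a → b = 0`. -/
lemma add_cancel_left {a b : A} (hd : S.Dadd a b) (h : S.add a b = a) : b = S.zero := by
  have := (S.lm_iff (S.add a b) a b).mpr ⟨hd, S.rm_self_defined _⟩
  have hb : S.Drm S.zero b := by
    have h2 := this.2
    rwa [h, S.lm_self a] at h2
  exact S.le_zero_eq hb

/-- (i) second half: `a + b = b → a = 0`. -/
lemma add_cancel_right {a b : A} (hd : S.Dadd a b) (h : S.add a b = b) : a = S.zero := by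
  have := (S.rm_iff (S.add a b) b a).mpr ⟨hd, S.rm_self_defined _⟩
  have ha : S.Drm S.zero a := by
    have h2 := this.2
    rwa [h, S.rm_self b] at h2
  exact S.le_zero_eq ha

end GPPEA

theorem gppea_cancellation_zero {A : Type*} (S : GPPEA A) :
    (∀ a b : A, S.Dadd a b →
      (S.add a b = a → b = S.zero) ∧ (S.add a b = b → a = S.zero)) ∧
    (∀ a b : A, S.Dadd a b → S.add a b = S.zero → a = S.zero ∧ b = S.zero) ∧
    (∀ a b : A, S.Dlm a b → (S.lm a b = a ↔ b = S.zero)) ∧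
    (∀ a b : A, S.Drm a b → (S.rm a b = a ↔ b = S.zero)) := by
  refine ⟨fun a b hd => ⟨S.add_cancel_left hd, S.add_cancel_right hd⟩, ?_, ?_, ?_⟩
  · -- (ii)
    intro a b hd h
    have hb : S.Drm S.zero b := h ▸ (S.le_add_left hd).1
    have ha : S.Drm S.zero a := h ▸ S.le_add_right' hd
    exact ⟨S.le_zero_eq ha, S.le_zero_eq hb⟩
  · -- (iii) left minus
    intro a b hd
    constructor
    · intro h
      obtain ⟨hba, hle⟩ := (S.lm_iff a b a).mp ⟨hd, by rw [h]; exact S.rm_self_defined a⟩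
      have heq : S.add b a = a := S.le_antisymm' _ _ hle (S.le_add_left hba).1
      exact S.add_cancel_right hba heq
    · rintro rfl
      have h1 : S.Drm (S.lm a S.zero) a := by
        refine ((S.lm_iff a S.zero a).mpr ⟨(S.zero_add a).1, ?_⟩).2
        rw [(S.zero_add a).2]; exact S.rm_self_defined a
      exact S.le_antisymm' _ _ (S.lm_le hd) h1
  · -- (iii) right minus
    intro a b hd
    constructor
    · intro h
      obtain ⟨hab, hle⟩ := (S.rm_iff a b a).mp ⟨hd, by rw [h]; exact S.rm_self_defined a⟩
      have heq : S.add a b = a := S.le_antisymm' _ _ hle (S.le_add_right' hab)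
      exact S.add_cancel_left hab heq
    · rintro rfl
      have h1 : S.Drm (S.rm a S.zero) a := by
        refine ((S.rm_iff a S.zero a).mpr ⟨(S.add_zero a).1, ?_⟩).2
        rw [(S.add_zero a).2]; exact S.rm_self_defined a
      exact S.le_antisymm' _ _ (S.rm_le hd) h1
end

section
/- Let (A; +, ∖, /, 0) be a generalized pre pseudo effect algebra. Then + is partially associative: for all a, b, c ∈ A, a+b and (a+b)+c are defined iff b+c and a+(b+c) are defined, and in that case (a+b)+c = a+(b+c). -/
private lemma gppea_forward {A : Type*} (S : GPPEA A) (a b c : A)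
    (h1 : S.Dadd a b) (h2 : S.Dadd (S.add a b) c) :
    S.Dadd b c ∧ S.Dadd a (S.add b c) ∧
      S.Drm (S.add (S.add a b) c) (S.add a (S.add b c)) := by
  set d := S.add (S.add a b) c with hd
  have step1 : S.Dlm d (S.add a b) ∧ S.Drm (S.lm d (S.add a b)) c :=
    (S.lm_iff d (S.add a b) c).mpr ⟨h2, S.rm_self_defined d⟩
  have hdab : S.Drm d (S.add a b) := (S.defined_iff _ _).mpr step1.1
  have step3 : S.Dlm d a ∧ S.Drm (S.lm d a) b :=
    (S.lm_iff d a b).mpr ⟨h1, hdab⟩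
  have heq : S.lm (S.lm d a) b = S.lm d (S.add a b) :=
    S.lm_eq d a b step3.1 step3.2
  have h5 : S.Drm (S.lm (S.lm d a) b) c := heq ▸ step1.2
  have h6 : S.Dadd b c ∧ S.Drm (S.lm d a) (S.add b c) :=
    (S.lm_iff (S.lm d a) b c).mp ⟨(S.defined_iff _ _).mp step3.2, h5⟩
  have h7 : S.Dadd a (S.add b c) ∧ S.Drm d (S.add a (S.add b c)) :=
    (S.lm_iff d a (S.add b c)).mp ⟨step3.1, h6.2⟩
  exact ⟨h6.1, h7.1, h7.2⟩

private lemma gppea_backward {A : Type*} (S : GPPEA A) (a b c : A)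
    (h1 : S.Dadd b c) (h2 : S.Dadd a (S.add b c)) :
    S.Dadd a b ∧ S.Dadd (S.add a b) c ∧
      S.Drm (S.add a (S.add b c)) (S.add (S.add a b) c) := by
  set e := S.add a (S.add b c) with he
  have step1 : S.Drm e (S.add b c) ∧ S.Drm (S.rm e (S.add b c)) a :=
    (S.rm_iff e (S.add b c) a).mpr ⟨h2, S.rm_self_defined e⟩
  have step2 : S.Drm e c ∧ S.Drm (S.rm e c) b :=
    (S.rm_iff e c b).mpr ⟨h1, step1.1⟩
  have heq : S.rm (S.rm e c) b = S.rm e (S.add b c) :=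
    S.rm_eq e c b step2.1 step2.2
  have h4 : S.Drm (S.rm (S.rm e c) b) a := heq ▸ step1.2
  have h5 : S.Dadd a b ∧ S.Drm (S.rm e c) (S.add a b) :=
    (S.rm_iff (S.rm e c) b a).mp ⟨step2.2, h4⟩
  have h6 : S.Dadd (S.add a b) c ∧ S.Drm e (S.add (S.add a b) c) :=
    (S.rm_iff e c (S.add a b)).mp ⟨step2.1, h5.2⟩
  exact ⟨h5.1, h6.1, h6.2⟩

theorem gppea_add_assoc {A : Type*} (S : GPPEA A) :
    ∀ a b c : A,
      ((S.Dadd a b ∧ S.Dadd (S.add a b) c) ↔ (S.Dadd b c ∧ S.Dadd a (S.add b c))) ∧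
      (S.Dadd a b → S.Dadd (S.add a b) c →
        S.add (S.add a b) c = S.add a (S.add b c)) := by
  intro a b c
  constructor
  · constructor
    · rintro ⟨h1, h2⟩
      obtain ⟨k1, k2, _⟩ := gppea_forward S a b c h1 h2
      exact ⟨k1, k2⟩
    · rintro ⟨h1, h2⟩
      obtain ⟨k1, k2, _⟩ := gppea_backward S a b c h1 h2
      exact ⟨k1, k2⟩
  · intro h1 h2
    obtain ⟨k1, k2, hle⟩ := gppea_forward S a b c h1 h2
    obtain ⟨_, _, hge⟩ := gppea_backward S a b c k1 k2
    exact S.le_antisymm' _ _ hge hle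
end

section
/- Let (A; +, ∖, /, 0) be a generalized pre pseudo effect algebra with induced partial order ≤. Then: (i) if a ≥ b ≥ c, then a∖c and b∖c are defined with a∖c ≥ b∖c, and a/c and b/c are defined with a/c ≥ b/c; (ii) if a ≥ b and a+c is defined, then b+c is defined, a+c ≥ b+c, and (a+c)∖(b+c) is defined with (a+c)∖(b+c) ≥ a∖b; (iii) if a ≥ b and c+a is defined, then c+b is defined, c+a ≥ c+b, and (c+a)/(c+b) is defined with (c+a)/(c+b) ≥ a/b. -/
private lemma gppea_part1 {A : Type*} (S : GPPEA A) (a b c : A)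
    (hba : S.le b a) (hcb : S.le c b) :
    S.Drm a c ∧ S.Drm b c ∧ S.le (S.rm b c) (S.rm a c) ∧
      S.Dlm a c ∧ S.Dlm b c ∧ S.le (S.lm b c) (S.lm a c) := by
  unfold GPPEA.le at *
  have hac : S.Drm a c := S.le_trans' c b a hcb hba
  -- right minus
  have h1 := (S.rm_iff b c (S.rm b c)).mp ⟨hcb, S.rm_self_defined _⟩
  have h2 : S.Drm a (S.add (S.rm b c) c) := S.le_trans' _ b a h1.2 hba
  have h3 := (S.rm_iff a c (S.rm b c)).mpr ⟨h1.1, h2⟩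
  -- left minus
  have hlb : S.Dlm b c := (S.defined_iff c b).mp hcb
  have h4 := (S.lm_iff b c (S.lm b c)).mp ⟨hlb, S.rm_self_defined _⟩
  have h5 : S.Drm a (S.add c (S.lm b c)) := S.le_trans' _ b a h4.2 hba
  have h6 := (S.lm_iff a c (S.lm b c)).mpr ⟨h4.1, h5⟩
  exact ⟨hac, hcb, h3.2, h6.1, hlb, h6.2⟩

theorem gppea_monotone {A : Type*} (S : GPPEA A) :
    (∀ a b c : A, S.le b a → S.le c b →
      S.Drm a c ∧ S.Drm b c ∧ S.le (S.rm b c) (S.rm a c) ∧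
      S.Dlm a c ∧ S.Dlm b c ∧ S.le (S.lm b c) (S.lm a c)) ∧
    (∀ a b c : A, S.le b a → S.Dadd a c →
      S.Dadd b c ∧ S.le (S.add b c) (S.add a c) ∧
      S.Drm (S.add a c) (S.add b c) ∧
      S.le (S.rm a b) (S.rm (S.add a c) (S.add b c))) ∧
    (∀ a b c : A, S.le b a → S.Dadd c a →
      S.Dadd c b ∧ S.le (S.add c b) (S.add c a) ∧
      S.Dlm (S.add c a) (S.add c b) ∧
      S.le (S.lm a b) (S.lm (S.add c a) (S.add c b))) := by
  refine ⟨fun a b c hba hcb => gppea_part1 S a b c hba hcb, ?_, ?_⟩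
  · intro a b c hba hac
    unfold GPPEA.le at *
    -- d := rm (a+c) c ≥ a
    have h1 := (S.rm_iff (S.add a c) c a).mpr ⟨hac, S.rm_self_defined _⟩
    set d := S.rm (S.add a c) c with hd
    have hdb : S.Drm d b := S.le_trans' b a d hba h1.2
    have h2 := (S.rm_iff (S.add a c) c b).mp ⟨h1.1, hdb⟩
    have heq : S.rm d b = S.rm (S.add a c) (S.add b c) := S.rm_eq _ c b h1.1 hdb
    have hp := gppea_part1 S d a b h1.2 hba
    refine ⟨h2.1, h2.2, h2.2, ?_⟩
    have := hp.2.2.1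
    unfold GPPEA.le at this
    rwa [heq] at this
  · intro a b c hba hca
    unfold GPPEA.le at *
    have h1 := (S.lm_iff (S.add c a) c a).mpr ⟨hca, S.rm_self_defined _⟩
    set d := S.lm (S.add c a) c with hd
    have hdb : S.Drm d b := S.le_trans' b a d hba h1.2
    have h2 := (S.lm_iff (S.add c a) c b).mp ⟨h1.1, hdb⟩
    have heq : S.lm d b = S.lm (S.add c a) (S.add c b) := S.lm_eq _ c b h1.1 hdb
    have hp := gppea_part1 S d a b h1.2 hba
    refine ⟨h2.1, h2.2, (S.defined_iff _ _).mp h2.2, ?_⟩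
    have := hp.2.2.2.2.2
    unfold GPPEA.le at this
    rwa [heq] at this
end

section
/- Let (A; +, ∖, /, 0) be a generalized pre pseudo effect algebra with induced partial order ≤. If a ≥ b ≥ c, then (a∖b)+(b∖c) is defined and a∖c ≥ (a∖b)+(b∖c), and (b/c)+(a/b) is defined and a/c ≥ (b/c)+(a/b). -/
theorem gppea_triangle {A : Type*} (S : GPPEA A) :
    ∀ a b c : A, S.le c b → S.le b a →
      (S.Dadd (S.rm a b) (S.rm b c) ∧
        S.le (S.add (S.rm a b) (S.rm b c)) (S.rm a c)) ∧
      (S.Dadd (S.lm b c) (S.lm a b) ∧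
        S.le (S.add (S.lm b c) (S.lm a b)) (S.lm a c)) := by
  intro a b c hbc hab
  have hac : S.Drm a c := S.le_trans' c b a hbc hab
  constructor
  · -- right-minus part
    obtain ⟨hD1, hbd⟩ := (S.rm_iff b c (S.rm b c)).mp ⟨hbc, S.rm_self_defined _⟩
    have had : S.Drm a (S.add (S.rm b c) c) := S.le_trans' _ b a hbd hab
    obtain ⟨-, h1⟩ := (S.rm_iff a c (S.rm b c)).mpr ⟨hD1, had⟩
    have heq1 : S.rm (S.rm a c) (S.rm b c) = S.rm a (S.add (S.rm b c) c) :=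
      S.rm_eq a c (S.rm b c) hac h1
    obtain ⟨hD2, hae⟩ := (S.rm_iff a b (S.rm a b)).mp ⟨hab, S.rm_self_defined _⟩
    obtain ⟨hDlm, hlemb⟩ :=
      (S.lm_iff (S.add (S.rm a b) b) (S.rm a b) b).mpr ⟨hD2, S.rm_self_defined _⟩
    have hlemd : S.Drm (S.lm (S.add (S.rm a b) b) (S.rm a b)) (S.add (S.rm b c) c) :=
      S.le_trans' _ b _ hbd hlemb
    obtain ⟨hD3, hed⟩ :=
      (S.lm_iff (S.add (S.rm a b) b) (S.rm a b) (S.add (S.rm b c) c)).mp ⟨hDlm, hlemd⟩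
    have haxd : S.Drm a (S.add (S.rm a b) (S.add (S.rm b c) c)) :=
      S.le_trans' _ _ a hed hae
    obtain ⟨-, h2⟩ := (S.rm_iff a (S.add (S.rm b c) c) (S.rm a b)).mpr ⟨hD3, haxd⟩
    have h3 : S.Drm (S.rm (S.rm a c) (S.rm b c)) (S.rm a b) := by rw [heq1]; exact h2
    exact (S.rm_iff (S.rm a c) (S.rm b c) (S.rm a b)).mp ⟨h1, h3⟩
  · -- left-minus part
    have hlbc : S.Dlm b c := (S.defined_iff c b).mp hbc
    have hlab : S.Dlm a b := (S.defined_iff b a).mp hab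
    have hlac : S.Dlm a c := (S.defined_iff c a).mp hac
    obtain ⟨hD1, hbd⟩ := (S.lm_iff b c (S.lm b c)).mp ⟨hlbc, S.rm_self_defined _⟩
    have had : S.Drm a (S.add c (S.lm b c)) := S.le_trans' _ b a hbd hab
    obtain ⟨-, h1⟩ := (S.lm_iff a c (S.lm b c)).mpr ⟨hD1, had⟩
    have heq1 : S.lm (S.lm a c) (S.lm b c) = S.lm a (S.add c (S.lm b c)) :=
      S.lm_eq a c (S.lm b c) hlac h1
    obtain ⟨hD2, hae⟩ := (S.lm_iff a b (S.lm a b)).mp ⟨hlab, S.rm_self_defined _⟩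
    obtain ⟨hDrm, hremb⟩ :=
      (S.rm_iff (S.add b (S.lm a b)) (S.lm a b) b).mpr ⟨hD2, S.rm_self_defined _⟩
    have hremd : S.Drm (S.rm (S.add b (S.lm a b)) (S.lm a b)) (S.add c (S.lm b c)) :=
      S.le_trans' _ b _ hbd hremb
    obtain ⟨hD3, hed⟩ :=
      (S.rm_iff (S.add b (S.lm a b)) (S.lm a b) (S.add c (S.lm b c))).mp ⟨hDrm, hremd⟩
    have haxd : S.Drm a (S.add (S.add c (S.lm b c)) (S.lm a b)) :=
      S.le_trans' _ _ a hed hae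
    obtain ⟨-, h2⟩ := (S.lm_iff a (S.add c (S.lm b c)) (S.lm a b)).mpr ⟨hD3, haxd⟩
    have h3 : S.Drm (S.lm (S.lm a c) (S.lm b c)) (S.lm a b) := by rw [heq1]; exact h2
    have h1' : S.Dlm (S.lm a c) (S.lm b c) := (S.defined_iff _ _).mp h1
    exact (S.lm_iff (S.lm a c) (S.lm b c) (S.lm a b)).mp ⟨h1', h3⟩
end

section
/- Let (A; +, ∖, /, 0) be a generalized pre pseudo effect algebra. Then for all a, b, c ∈ A: (b∖a)/c is defined iff (b/c)∖a is defined, and in that case (b∖a)/c = (b/c)∖a. -/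
theorem gppea_rm_lm_commute {A : Type*} (S : GPPEA A) :
    ∀ a b c : A,
      ((S.Drm b a ∧ S.Dlm (S.rm b a) c) ↔ (S.Dlm b c ∧ S.Drm (S.lm b c) a)) ∧
      (S.Drm b a → S.Dlm (S.rm b a) c →
        S.lm (S.rm b a) c = S.rm (S.lm b c) a) := by
  intro a b c
  have main : ∀ a b c : A,
      (S.Drm b a ∧ S.Dlm (S.rm b a) c) → (S.Dlm b c ∧ S.Drm (S.lm b c) a) := by
    intro a b c ⟨h1, h2⟩
    have h2' : S.Drm (S.rm b a) c := (S.defined_iff c (S.rm b a)).mpr h2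
    have h3 := (S.rm_iff b a c).mp ⟨h1, h2'⟩
    exact (S.lm_iff b c a).mpr h3
  have back : ∀ a b c : A,
      (S.Dlm b c ∧ S.Drm (S.lm b c) a) → (S.Drm b a ∧ S.Dlm (S.rm b a) c) := by
    intro a b c h
    have h3 := (S.lm_iff b c a).mp h
    have h4 := (S.rm_iff b a c).mpr h3
    exact ⟨h4.1, (S.defined_iff c (S.rm b a)).mp h4.2⟩
  refine ⟨⟨main a b c, back a b c⟩, ?_⟩
  intro h1 h2
  have h2' : S.Drm (S.rm b a) c := (S.defined_iff c (S.rm b a)).mpr h2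
  obtain ⟨hbc, hy⟩ := main a b c ⟨h1, h2⟩
  set x := S.lm (S.rm b a) c with hx
  set y := S.rm (S.lm b c) a with hydef
  -- y ≤ x
  have hxy : S.Drm x y := by
    -- from y ≤ y
    have t1 := (S.rm_iff (S.lm b c) a y).mp ⟨hy, S.rm_self_defined y⟩
    -- t1 : Dadd y a ∧ Drm (b/c) (y+a)
    have t2 := (S.lm_iff b c (S.add y a)).mp ⟨hbc, t1.2⟩
    -- t2 : Dadd c (y+a) ∧ Drm b (c+(y+a))
    set s := S.add c (S.add y a) with hs
    have u1 := (S.lm_iff s c (S.add y a)).mpr ⟨t2.1, S.rm_self_defined s⟩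
    -- u1 : Dlm s c ∧ Drm (s/c) (y+a)
    have u2 := (S.lm_iff (S.lm s c) y a).mpr ⟨t1.1, u1.2⟩
    -- u2 : Dlm (s/c) y ∧ Drm ((s/c)/y) a
    have u2' : S.Drm (S.lm s c) y := (S.defined_iff y (S.lm s c)).mpr u2.1
    have u3 := (S.lm_iff s c y).mp ⟨u1.1, u2'⟩
    -- u3 : Dadd c y ∧ Drm s (c+y)
    have ueq : S.lm (S.lm s c) y = S.lm s (S.add c y) := S.lm_eq s c y u1.1 u2'
    have u4 : S.Drm (S.lm s (S.add c y)) a := ueq ▸ u2.2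
    have u5 := (S.lm_iff s (S.add c y) a).mp
      ⟨(S.defined_iff (S.add c y) s).mp u3.2, u4⟩
    -- u5 : Dadd (c+y) a ∧ Drm s ((c+y)+a)
    have u6 : S.Drm b (S.add (S.add c y) a) := S.le_trans' _ s b u5.2 t2.2
    have u7 := (S.rm_iff b a (S.add c y)).mpr ⟨u5.1, u6⟩
    -- u7 : Drm b a ∧ Drm (b∖a) (c+y)
    exact ((S.lm_iff (S.rm b a) c y).mpr ⟨u3.1, u7.2⟩).2
  -- x ≤ y
  have hyx : S.Drm y x := by
    have t1 := (S.lm_iff (S.rm b a) c x).mp ⟨h2, S.rm_self_defined x⟩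
    -- t1 : Dadd c x ∧ Drm (b∖a) (c+x)
    have t2 := (S.rm_iff b a (S.add c x)).mp ⟨h1, t1.2⟩
    -- t2 : Dadd (c+x) a ∧ Drm b ((c+x)+a)
    set s := S.add (S.add c x) a with hs
    have u1 := (S.rm_iff s a (S.add c x)).mpr ⟨t2.1, S.rm_self_defined s⟩
    -- u1 : Drm s a ∧ Drm (s∖a) (c+x)
    have u2 := (S.rm_iff (S.rm s a) x c).mpr ⟨t1.1, u1.2⟩
    -- u2 : Drm (s∖a) x ∧ Drm ((s∖a)∖x) c
    have u3 := (S.rm_iff s a x).mp ⟨u1.1, u2.1⟩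
    -- u3 : Dadd x a ∧ Drm s (x+a)
    have ueq : S.rm (S.rm s a) x = S.rm s (S.add x a) := S.rm_eq s a x u1.1 u2.1
    have u4 : S.Drm (S.rm s (S.add x a)) c := ueq ▸ u2.2
    have u5 := (S.rm_iff s (S.add x a) c).mp ⟨u3.2, u4⟩
    -- u5 : Dadd c (x+a) ∧ Drm s (c+(x+a))
    have u6 : S.Drm b (S.add c (S.add x a)) := S.le_trans' _ s b u5.2 t2.2
    have u7 := (S.lm_iff b c (S.add x a)).mpr ⟨u5.1, u6⟩
    -- u7 : Dlm b c ∧ Drm (b/c) (x+a)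
    exact ((S.rm_iff (S.lm b c) a x).mpr ⟨u3.1, u7.2⟩).2
  exact S.le_antisymm' x y hyx hxy
end

section
/- Let (A; +, ∖, /, 0) be a generalized pre pseudo effect algebra with induced partial order ≤. If a+b is defined, then a+b is the least element of the set P_{a,b} = {z ∈ A : z∖b is defined and a ≤ z∖b}, and also the least element of the set P^l_{a,b} = {z ∈ A : z/a is defined and b ≤ z/a}; moreover if a+b is undefined then P_{a,b} is empty. Consequently, the operation ∖ alone (respectively / alone) uniquely determines the operation +. -/
namespace GPPEA
variable {A : Type*}

lemma keyR (S : GPPEA A) {a b : A} (h : S.Dadd a b) :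
    S.Drm (S.add a b) b ∧ S.Drm (S.rm (S.add a b) b) a :=
  (S.rm_iff (S.add a b) b a).mpr ⟨h, S.rm_self_defined _⟩

lemma keyL (S : GPPEA A) {a b : A} (h : S.Dadd a b) :
    S.Dlm (S.add a b) a ∧ S.Drm (S.lm (S.add a b) a) b :=
  (S.lm_iff (S.add a b) a b).mpr ⟨h, S.rm_self_defined _⟩

lemma uniqR (S T : GPPEA A)
    (hD : ∀ a b : A, S.Drm a b ↔ T.Drm a b)
    (hV : ∀ a b : A, S.Drm a b → S.rm a b = T.rm a b)
    {a b : A} (h : S.Dadd a b) :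
    T.Dadd a b ∧ T.Drm (S.add a b) (T.add a b) := by
  obtain ⟨h1, h2⟩ := S.keyR h
  have h1' : T.Drm (S.add a b) b := (hD _ _).mp h1
  have h2' : T.Drm (T.rm (S.add a b) b) a := hV _ _ h1 ▸ (hD _ _).mp h2
  exact (T.rm_iff (S.add a b) b a).mp ⟨h1', h2'⟩

lemma uniqL (S T : GPPEA A)
    (hD : ∀ a b : A, S.Dlm a b ↔ T.Dlm a b)
    (hV : ∀ a b : A, S.Dlm a b → S.lm a b = T.lm a b)
    {a b : A} (h : S.Dadd a b) :
    T.Dadd a b ∧ T.Drm (S.add a b) (T.add a b) := by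
  have hD' : ∀ a b : A, S.Drm a b ↔ T.Drm a b := fun a b => by
    rw [S.defined_iff, T.defined_iff]; exact hD a b
  obtain ⟨h1, h2⟩ := S.keyL h
  have h1' : T.Dlm (S.add a b) a := (hD _ _).mp h1
  have h2' : T.Drm (T.lm (S.add a b) a) b := hV _ _ h1 ▸ (hD' _ _).mp h2
  exact (T.lm_iff (S.add a b) a b).mp ⟨h1', h2'⟩

end GPPEA

theorem gppea_add_determined_by_minus {A : Type*} (S : GPPEA A) :
    (∀ a b : A, S.Dadd a b →
      (S.Drm (S.add a b) b ∧ S.le a (S.rm (S.add a b) b)) ∧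
      (∀ z : A, S.Drm z b → S.le a (S.rm z b) → S.le (S.add a b) z) ∧
      (S.Dlm (S.add a b) a ∧ S.le b (S.lm (S.add a b) a)) ∧
      (∀ z : A, S.Dlm z a → S.le b (S.lm z a) → S.le (S.add a b) z)) ∧
    (∀ a b : A, ¬ S.Dadd a b → ∀ z : A, ¬ (S.Drm z b ∧ S.le a (S.rm z b))) ∧
    (∀ T : GPPEA A,
      (∀ a b : A, S.Drm a b ↔ T.Drm a b) →
      (∀ a b : A, S.Drm a b → S.rm a b = T.rm a b) →
      ∀ a b : A, (S.Dadd a b ↔ T.Dadd a b) ∧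
        (S.Dadd a b → S.add a b = T.add a b)) ∧
    (∀ T : GPPEA A,
      (∀ a b : A, S.Dlm a b ↔ T.Dlm a b) →
      (∀ a b : A, S.Dlm a b → S.lm a b = T.lm a b) →
      ∀ a b : A, (S.Dadd a b ↔ T.Dadd a b) ∧
        (S.Dadd a b → S.add a b = T.add a b)) := by
  refine ⟨?_, ?_, ?_, ?_⟩
  · intro a b h
    obtain ⟨h1, h2⟩ := S.keyR h
    obtain ⟨h3, h4⟩ := S.keyL h
    refine ⟨⟨h1, h2⟩, ?_, ⟨h3, h4⟩, ?_⟩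
    · intro z hz hle
      exact ((S.rm_iff z b a).mp ⟨hz, hle⟩).2
    · intro z hz hle
      exact ((S.lm_iff z a b).mp ⟨hz, hle⟩).2
  · intro a b h z ⟨hz, hle⟩
    exact h ((S.rm_iff z b a).mp ⟨hz, hle⟩).1
  · intro T hD hV a b
    constructor
    · constructor
      · intro h; exact (S.uniqR T hD hV h).1
      · intro h
        exact (T.uniqR S (fun a b => (hD a b).symm)
          (fun a b hb => (hV a b ((hD a b).mpr hb)).symm) h).1
    · intro h
      have hST := (S.uniqR T hD hV h).2
      have hT : T.Dadd a b := (S.uniqR T hD hV h).1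
      have hTS := (T.uniqR S (fun a b => (hD a b).symm)
          (fun a b hb => (hV a b ((hD a b).mpr hb)).symm) hT).2
      exact T.le_antisymm' _ _ ((hD _ _).mp hTS) hST
  · intro T hD hV a b
    constructor
    · constructor
      · intro h; exact (S.uniqL T hD hV h).1
      · intro h
        exact (T.uniqL S (fun a b => (hD a b).symm)
          (fun a b hb => (hV a b ((hD a b).mpr hb)).symm) h).1
    · intro h
      have hST := (S.uniqL T hD hV h).2
      have hT : T.Dadd a b := (S.uniqL T hD hV h).1
      have hTS := (T.uniqL S (fun a b => (hD a b).symm)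
          (fun a b hb => (hV a b ((hD a b).mpr hb)).symm) hT).2
      have hD' : ∀ a b : A, S.Drm a b ↔ T.Drm a b := fun a b => by
        rw [S.defined_iff, T.defined_iff]; exact hD a b
      exact T.le_antisymm' _ _ ((hD' _ _).mp hTS) hST
end
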